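/- Let N ≥ 3 and let a : ℝ → (0,∞)^{2N} be a differentiable solution of the periodic Volterra lattice equations ȧ_j = a_j(a_{j+1} − a_{j−1}). Then the symmetric matrix L₂(a(t)) = Σ_{j=1}^{2N} √(a_j(t))·(E_{j,j+1} + E_{j+1,j}) and the antisymmetric matrix A₂(a(t)) = (1/2) Σ_{j=1}^{2N} √(a_j(t) a_{j+1}(t))·(E_{j,j+2} − E_{j+2,j}) satisfy the Lax equation d/dt L₂(a(t)) = A₂(a(t))·L₂(a(t)) − L₂(a(t))·A₂(a(t)) for all t. -/

import Mathlib

/-!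
Write `S` for the cyclic shift and `D f` for the diagonal matrix with entries `f`. With
`ℓ = √a`, the Lax matrices are `L₂ = D ℓ S + S⁻¹ D ℓ` and `2 A₂ = D m S² - S⁻² D m`, where
`m j = ℓ j * ℓ (j + 1)`. Weighted shifts multiply as `D f Sᵏ * D g Sˡ = D (f * g (· + k)) Sᵏ⁺ˡ`,
so `[A₂, L₂]` is a sum of four weighted shifts: those by `±3` cancel, and those by `±1`
reproduce `L₂` with `ℓ j` replaced by `ℓ j (ℓ (j + 1)² - ℓ (j - 1)²) / 2`, which by the Volterra
equation is the time derivative of `√(a j)`.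
-/

open Matrix

instance neZeroTwoMul (N : ℕ) [NeZero N] : NeZero (2 * N) :=
  ⟨by have := NeZero.ne N; omega⟩

/-- `Emat N r s` is the `2N × 2N` real matrix with a `1` in position `(r, s)`
and zeros elsewhere, indices taken mod `2N`. -/
noncomputable def Emat (N : ℕ) [NeZero N] (r s : ZMod (2 * N)) :
    Matrix (ZMod (2 * N)) (ZMod (2 * N)) ℝ :=
  Matrix.single r s 1

/-- Moser's symmetric Lax matrix `L₂(a) = ∑ j, √(a j) • (E_{j,j+1} + E_{j+1,j})`. -/
noncomputable def LaxL2 (N : ℕ) [NeZero N] (a : ZMod (2 * N) → ℝ) :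
    Matrix (ZMod (2 * N)) (ZMod (2 * N)) ℝ :=
  ∑ j : ZMod (2 * N), Real.sqrt (a j) • (Emat N j (j + 1) + Emat N (j + 1) j)

/-- The antisymmetric companion matrix
`A₂(a) = (1/2) ∑ j, √(a j * a (j+1)) • (E_{j,j+2} - E_{j+2,j})`. -/
noncomputable def LaxA2 (N : ℕ) [NeZero N] (a : ZMod (2 * N) → ℝ) :
    Matrix (ZMod (2 * N)) (ZMod (2 * N)) ℝ :=
  (1 / 2 : ℝ) • ∑ j : ZMod (2 * N),
    Real.sqrt (a j * a (j + 1)) • (Emat N j (j + 2) - Emat N (j + 2) j)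

section WeightedShift

variable {ι R : Type*} [DecidableEq ι]

def weightedShift [Add ι] [Zero R] (f : ι → R) (k : ι) : Matrix ι ι R :=
  Matrix.of fun i j => if j = i + k then f i else 0

section Add

variable [Add ι]

@[simp]
theorem weightedShift_apply [Zero R] (f : ι → R) (k i j : ι) :
    weightedShift f k i j = if j = i + k then f i else 0 :=
  rfl

@[simp]
theorem weightedShift_zero [Zero R] (k : ι) : weightedShift (0 : ι → R) k = 0 := by
  ext; simp

theorem weightedShift_neg [NegZeroClass R] (f : ι → R) (k : ι) :
    weightedShift (-f) k = -weightedShift f k := by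
  ext; simp only [weightedShift_apply, Pi.neg_apply, Matrix.neg_apply]; split_ifs <;> simp

theorem weightedShift_smul [Zero R] {S : Type*} [SMulZeroClass S R] (c : S) (f : ι → R) (k : ι) :
    weightedShift (c • f) k = c • weightedShift f k := by
  ext; simp only [weightedShift_apply, Pi.smul_apply, Matrix.smul_apply]; split_ifs <;> simp

theorem hasDerivAt_weightedShift_apply {f : ℝ → ι → ℝ} {f' : ι → ℝ} {t : ℝ}
    (hf : ∀ i, HasDerivAt (fun s => f s i) (f' i) t) (k i j : ι) :
    HasDerivAt (fun s => weightedShift (f s) k i j) (weightedShift f' k i j) t := by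
  simp only [weightedShift_apply]
  split_ifs
  exacts [hf i, hasDerivAt_const t 0]

end Add

variable [Fintype ι]

theorem weightedShift_mul_weightedShift [AddSemigroup ι] [NonUnitalNonAssocSemiring R]
    (f g : ι → R) (k l : ι) :
    weightedShift f k * weightedShift g l = weightedShift (fun i => f i * g (i + k)) (k + l) := by
  ext i j
  simp only [Matrix.mul_apply, weightedShift_apply, ite_mul, zero_mul]
  simp only [mul_ite, mul_zero, Finset.sum_ite_eq', Finset.mem_univ, if_true, add_assoc]

theorem weightedShift_commutator [AddCommSemigroup ι] [CommRing R] (f g : ι → R) (k l : ι) :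
    weightedShift f k * weightedShift g l - weightedShift g l * weightedShift f k =
      weightedShift (fun i => f i * g (i + k) - g i * f (i + l)) (k + l) := by
  ext i j
  rw [weightedShift_mul_weightedShift, weightedShift_mul_weightedShift, add_comm l k]
  simp only [Matrix.sub_apply, weightedShift_apply]
  split_ifs <;> simp

theorem sum_smul_single_self_add [AddGroup ι] [Semiring R] (c : ι → R) (k : ι) :
    ∑ j, c j • Matrix.single j (j + k) (1 : R) = weightedShift c k := by
  ext i j
  simp [Matrix.sum_apply, Matrix.single_apply, ite_and, eq_comm]

theorem sum_smul_single_add_self [AddGroup ι] [Semiring R] (c : ι → R) (k : ι) :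
    ∑ j, c j • Matrix.single (j + k) j (1 : R) = weightedShift (fun i => c (i - k)) (-k) := by
  ext i j
  have h : ∀ x, x + k = i ↔ x = i - k := fun x => eq_sub_iff_add_eq.symm
  simp [Matrix.sum_apply, Matrix.single_apply, ite_and, h, sub_eq_add_neg, eq_comm]

end WeightedShift

section Lax

variable {ι R : Type*} [Ring ι] [DecidableEq ι]

def symmShift [AddZeroClass R] (ℓ : ι → R) : Matrix ι ι R :=
  weightedShift ℓ 1 + weightedShift (fun i => ℓ (i - 1)) (-1)

def skewShift [AddGroup R] (m : ι → R) : Matrix ι ι R :=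
  weightedShift m 2 - weightedShift (fun i => m (i - 2)) (-2)

theorem symmShift_smul [AddMonoid R] {S : Type*} [Monoid S] [DistribMulAction S R] (c : S)
    (ℓ : ι → R) : symmShift (c • ℓ) = c • symmShift ℓ := by
  rw [symmShift, symmShift, smul_add, ← weightedShift_smul, ← weightedShift_smul]
  rfl

theorem hasDerivAt_symmShift_apply {ℓ : ℝ → ι → ℝ} {ℓ' : ι → ℝ} {t : ℝ}
    (hℓ : ∀ i, HasDerivAt (fun s => ℓ s i) (ℓ' i) t) (i j : ι) :
    HasDerivAt (fun s => symmShift (ℓ s) i j) (symmShift ℓ' i j) t :=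
  (hasDerivAt_weightedShift_apply hℓ 1 i j).add
    (hasDerivAt_weightedShift_apply (fun i => hℓ (i - 1)) (-1) i j)

end Lax

theorem skewShift_commutator_symmShift {ι R : Type*} [CommRing ι] [Fintype ι] [DecidableEq ι]
    [CommRing R] (ℓ : ι → R) :
    skewShift (fun i => ℓ i * ℓ (i + 1)) * symmShift ℓ -
        symmShift ℓ * skewShift (fun i => ℓ i * ℓ (i + 1)) =
      symmShift (fun i => ℓ i * (ℓ (i + 1) ^ 2 - ℓ (i - 1) ^ 2)) := by
  have expand : ∀ X Y P Q : Matrix ι ι R, (X - Y) * (P + Q) - (P + Q) * (X - Y) =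
      (X * P - P * X) + (X * Q - Q * X) - ((Y * P - P * Y) + (Y * Q - Q * Y)) := fun _ _ _ _ => by
    noncomm_ring
  rw [skewShift, symmShift, expand]
  simp only [weightedShift_commutator]
  -- normalising the indices shows that the coefficients of the shifts by `±3` vanish
  ring_nf
  rw [← Pi.zero_def, weightedShift_zero, weightedShift_zero, zero_add, add_zero, symmShift,
    sub_eq_add_neg, ← weightedShift_neg]
  congr 2
  ext i
  simp only [Pi.neg_apply]
  ring_nf

theorem LaxL2_eq_symmShift (N : ℕ) [NeZero N] (a : ZMod (2 * N) → ℝ) :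
    LaxL2 N a = symmShift fun j => √(a j) := by
  simp only [LaxL2, Emat, smul_add, Finset.sum_add_distrib, sum_smul_single_self_add,
    sum_smul_single_add_self]
  rfl

theorem LaxA2_eq_smul_skewShift (N : ℕ) [NeZero N] (a : ZMod (2 * N) → ℝ) (ha : 0 ≤ a) :
    LaxA2 N a = (1 / 2 : ℝ) • skewShift fun j => √(a j) * √(a (j + 1)) := by
  simp only [LaxA2, Emat, smul_sub, Finset.sum_sub_distrib, sum_smul_single_self_add,
    sum_smul_single_add_self, Real.sqrt_mul (ha _)]
  rw [← smul_sub]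
  rfl

theorem volterra_lax_symmetric_general (N : ℕ) [NeZero N]
    (a : ℝ → ZMod (2 * N) → ℝ)
    (hpos : ∀ t j, 0 < a t j)
    (hvolt : ∀ t j, HasDerivAt (fun s => a s j) (a t j * (a t (j + 1) - a t (j - 1))) t) :
    ∀ t i j, HasDerivAt (fun s => LaxL2 N (a s) i j)
      ((LaxA2 N (a t) * LaxL2 N (a t) - LaxL2 N (a t) * LaxA2 N (a t)) i j) t := by
  intro t i j
  have hsqrt : ∀ j, HasDerivAt (fun s => √(a s j))
      (√(a t j) / 2 * (a t (j + 1) - a t (j - 1))) t := fun j => by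
    refine ((hvolt t j).sqrt (hpos t j).ne').congr_deriv ?_
    rw [div_eq_iff (mul_ne_zero two_ne_zero (Real.sqrt_pos.mpr (hpos t j)).ne')]
    linear_combination (a t (j - 1) - a t (j + 1)) * Real.mul_self_sqrt (hpos t j).le
  have hlax : LaxA2 N (a t) * LaxL2 N (a t) - LaxL2 N (a t) * LaxA2 N (a t) =
      symmShift fun j => √(a t j) / 2 * (a t (j + 1) - a t (j - 1)) := by
    rw [LaxA2_eq_smul_skewShift N _ fun j => (hpos t j).le, LaxL2_eq_symmShift, smul_mul_assoc,
      mul_smul_comm, ← smul_sub, skewShift_commutator_symmShift, ← symmShift_smul]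
    congr 1
    ext j
    simp only [Pi.smul_apply, smul_eq_mul, Real.sq_sqrt (hpos t _).le]
    ring
  rw [hlax]
  simpa only [LaxL2_eq_symmShift] using hasDerivAt_symmShift_apply hsqrt i j

/-- For a differentiable positive solution of the periodic Volterra lattice, the
pair `(L₂, A₂)` satisfies the Lax equation `d/dt L₂(a(t)) = [A₂(a(t)), L₂(a(t))]`. -/
theorem volterra_lax_symmetric (N : ℕ) [NeZero N] (hN : 3 ≤ N)
    (a : ℝ → ZMod (2 * N) → ℝ)
    (hpos : ∀ t j, 0 < a t j)
    (hdiff : ∀ j, Differentiable ℝ fun t => a t j)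
    (hvolt : ∀ t j, HasDerivAt (fun s => a s j) (a t j * (a t (j + 1) - a t (j - 1))) t) :
    ∀ t i j, HasDerivAt (fun s => LaxL2 N (a s) i j)
      ((LaxA2 N (a t) * LaxL2 N (a t) - LaxL2 N (a t) * LaxA2 N (a t)) i j) t :=
  volterra_lax_symmetric_general N a hpos hvolt
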